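/- arXiv:2505.06050 — 2 statements merged into one kernel-verified Lean document; each statement's English description precedes it below -/
import Mathlib

section
/- Let p be a probability distribution on a finite set X and r ∈ ℝ. Then sup_{0 ≤ s ≤ 1} inf_{t ∈ Q(X)} [ 2 D(t‖p) + s(H(t) + r) ] = inf_{t ∈ Q(X)} [ 2 D(t‖p) + max{0, H(t) + r} ], i.e. the sup and inf can be exchanged and the inner supremum over s evaluates to the positive-part. -/
/-- `p` is a probability distribution on the finite set `X`. -/
def IsProb {X : Type*} [Fintype X] (p : X → ℝ) : Prop :=
  (∀ x, 0 ≤ p x) ∧ ∑ x, p x = 1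

/-- Base-2 Shannon entropy. -/
noncomputable def shannonEntropy {X : Type*} [Fintype X] (t : X → ℝ) : ℝ :=
  -∑ x, t x * Real.logb 2 (t x)

/-- Base-2 relative entropy (Kullback–Leibler divergence). -/
noncomputable def Dkl {X : Type*} [Fintype X] (t p : X → ℝ) : ℝ :=
  ∑ x, t x * Real.logb 2 (t x / p x)

/-! For `s < 2` and `β = 2 / (2 - s)`, the objective rewrites as
`2 D(t‖p) + s (H(t) + r) = (2 - s) (D(t‖T) - log Z) + s r` with the escort distribution
`T = p^β / Z`, `Z = ∑ p^β`; by Gibbs' inequality the inner infimum is attained at `T`.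
Since `s a ≤ max 0 a` on `[0, 1]`, every inner infimum lies below every value on the right.
Conversely `s ↦ H(T) + r` is continuous, so the intermediate value theorem yields `u ∈ [0, 1]`
with `u (H(T) + r) = max 0 (H(T) + r)`: the escort distribution at `u` realises the inner
infimum at `u` as a value on the right. -/

open Real Set

theorem csSup_eq_csInf_of_forall_le {α : Type*} [ConditionallyCompleteLattice α]
    {L R : Set α} {a : α} (haL : a ∈ L) (haR : a ∈ R) (h : ∀ v ∈ L, ∀ w ∈ R, v ≤ w) :
    sSup L = sInf R :=
  (IsGreatest.csSup_eq ⟨haL, fun v hv => h v hv a haR⟩).trans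
    (IsLeast.csInf_eq ⟨haR, fun w hw => h a haL w hw⟩).symm

theorem mul_le_max_zero {s : ℝ} (hs : s ∈ Icc (0 : ℝ) 1) (a : ℝ) : s * a ≤ max 0 a := by
  rcases le_or_gt 0 a with ha | ha
  · exact (mul_le_of_le_one_left ha hs.2).trans (le_max_right 0 a)
  · exact (mul_nonpos_of_nonneg_of_nonpos hs.1 ha.le).trans (le_max_left 0 a)

theorem exists_mem_Icc_max_zero_eq_mul {h : ℝ → ℝ} (hh : ContinuousOn h (Icc 0 1)) :
    ∃ u ∈ Icc (0 : ℝ) 1, max 0 (h u) = u * h u := by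
  by_cases h0 : h 0 ≤ 0
  · exact ⟨0, left_mem_Icc.2 zero_le_one, by rw [max_eq_left h0, zero_mul]⟩
  by_cases h1 : 0 ≤ h 1
  · exact ⟨1, right_mem_Icc.2 zero_le_one, by rw [max_eq_right h1, one_mul]⟩
  rw [not_le] at h0 h1
  obtain ⟨u, hu, hu0⟩ := intermediate_value_Icc' zero_le_one hh ⟨h1.le, h0.le⟩
  exact ⟨u, hu, by rw [hu0, max_self, mul_zero]⟩

section Entropy

variable {X : Type*} [Fintype X]

theorem IsProb.exists_pos {p : X → ℝ} (hp : IsProb p) : ∃ x, 0 < p x := by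
  by_contra! h
  have : ∑ x, p x = 0 := Finset.sum_eq_zero fun x _ => (h x).antisymm (hp.1 x)
  exact zero_ne_one (this.symm.trans hp.2)

theorem Dkl_self (p : X → ℝ) : Dkl p p = 0 :=
  Finset.sum_eq_zero fun x _ => by
    rcases eq_or_ne (p x) 0 with hx | hx
    · rw [hx, zero_mul]
    · rw [div_self hx, logb_one, mul_zero]

theorem Dkl_nonneg {t q : X → ℝ} (ht : IsProb t) (hq0 : ∀ x, 0 ≤ q x) (hq1 : ∑ x, q x ≤ 1)
    (hsupp : ∀ x, q x = 0 → t x = 0) : 0 ≤ Dkl t q := by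
  have pointwise : ∀ x, t x - q x ≤ t x * log (t x / q x) := by
    intro x
    rcases (ht.1 x).eq_or_lt with htx | htx
    · rw [← htx]; simpa using hq0 x
    have hqx : 0 < q x := (hq0 x).lt_of_ne fun h => htx.ne' (hsupp x h.symm)
    have := mul_le_mul_of_nonneg_left (one_sub_inv_le_log_of_pos (div_pos htx hqx)) htx.le
    rwa [inv_div, mul_sub, mul_one, mul_div_cancel₀ _ htx.ne'] at this
  have hlog : 0 ≤ ∑ x, t x * log (t x / q x) := by
    have := Finset.sum_le_sum fun x (_ : x ∈ Finset.univ) => pointwise x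
    rw [Finset.sum_sub_distrib, ht.2] at this
    linarith
  have hDkl : Dkl t q = (∑ x, t x * log (t x / q x)) / log 2 := by
    simp only [Dkl, logb, Finset.sum_div, mul_div_assoc]
  rw [hDkl]
  exact div_nonneg hlog (log_nonneg one_le_two)

theorem continuous_shannonEntropy : Continuous (shannonEntropy : (X → ℝ) → ℝ) := by
  have h : (shannonEntropy : (X → ℝ) → ℝ) = fun t => -∑ x, t x * log (t x) / log 2 := by
    funext t
    simp only [shannonEntropy, logb, mul_div_assoc]
  rw [h]
  exact continuous_neg.comp <| continuous_finsetSum _ fun x _ =>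
    (continuous_mul_log.comp (continuous_apply x)).div_const _

noncomputable def tiltNorm (p : X → ℝ) (β : ℝ) : ℝ :=
  ∑ x, p x ^ β

noncomputable def tilt (p : X → ℝ) (β : ℝ) (x : X) : ℝ :=
  p x ^ β / tiltNorm p β

variable {p : X → ℝ} {β : ℝ}

theorem tiltNorm_pos (hp : IsProb p) (β : ℝ) : 0 < tiltNorm p β := by
  obtain ⟨x, hx⟩ := hp.exists_pos
  exact Finset.sum_pos' (fun y _ => rpow_nonneg (hp.1 y) β)
    ⟨x, Finset.mem_univ x, rpow_pos_of_pos hx β⟩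

theorem tilt_eq_zero (hβ : β ≠ 0) {x : X} (hx : p x = 0) : tilt p β x = 0 := by
  rw [tilt, hx, zero_rpow hβ, zero_div]

theorem tilt_pos (hp : IsProb p) {x : X} (hx : 0 < p x) : 0 < tilt p β x :=
  div_pos (rpow_pos_of_pos hx β) (tiltNorm_pos hp β)

theorem isProb_tilt (hp : IsProb p) (β : ℝ) : IsProb (tilt p β) := by
  refine ⟨fun x => div_nonneg (rpow_nonneg (hp.1 x) β) (tiltNorm_pos hp β).le, ?_⟩
  simp only [tilt]
  rw [← Finset.sum_div, ← tiltNorm, div_self (tiltNorm_pos hp β).ne']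

theorem logb_tilt (hp : IsProb p) {x : X} (hx : 0 < p x) :
    logb 2 (tilt p β x) = β * logb 2 (p x) - logb 2 (tiltNorm p β) := by
  rw [tilt, logb_div (rpow_pos_of_pos hx β).ne' (tiltNorm_pos hp β).ne', logb_rpow_eq_mul_logb_of_pos hx]

theorem Dkl_tilt (hp : IsProb p) {t : X → ℝ} (ht : IsProb t) (hsupp : ∀ x, p x = 0 → t x = 0) :
    Dkl t (tilt p β) = β * Dkl t p + (β - 1) * shannonEntropy t + logb 2 (tiltNorm p β) := by
  have pointwise : ∀ x, t x * logb 2 (t x / tilt p β x) = β * (t x * logb 2 (t x / p x))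
      - (β - 1) * (t x * logb 2 (t x)) + t x * logb 2 (tiltNorm p β) := by
    intro x
    rcases (ht.1 x).eq_or_lt with htx | htx
    · simp [← htx]
    have hpx : 0 < p x := (hp.1 x).lt_of_ne fun h => htx.ne' (hsupp x h.symm)
    rw [logb_div htx.ne' (tilt_pos hp hpx).ne', logb_div htx.ne' hpx.ne', logb_tilt hp hpx]
    ring
  rw [Dkl, Finset.sum_congr rfl fun x _ => pointwise x, Finset.sum_add_distrib,
    Finset.sum_sub_distrib, ← Finset.mul_sum, ← Finset.mul_sum, ← Finset.sum_mul, ht.2,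
    Dkl, shannonEntropy]
  ring

theorem continuousAt_tilt (hp : IsProb p) (hβ : β ≠ 0) : ContinuousAt (tilt p) β := by
  have hpow : ∀ x, ContinuousAt (fun b => p x ^ b) β := fun x => continuousAt_const_rpow' hβ
  refine continuousAt_pi.2 fun x => (hpow x).div ?_ (tiltNorm_pos hp β).ne'
  exact tendsto_finsetSum _ fun y _ => hpow y

theorem objective_eq_Dkl_tilt (hp : IsProb p) {s : ℝ} (hs : s ≠ 2) (r : ℝ) {t : X → ℝ}
    (ht : IsProb t) (hsupp : ∀ x, p x = 0 → t x = 0) :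
    2 * Dkl t p + s * (shannonEntropy t + r)
      = (2 - s) * (Dkl t (tilt p (2 / (2 - s))) - logb 2 (tiltNorm p (2 / (2 - s)))) + s * r := by
  have h2s : 2 - s ≠ 0 := sub_ne_zero.2 hs.symm
  rw [Dkl_tilt hp ht hsupp]
  field_simp
  ring

theorem objective_tilt (hp : IsProb p) {s : ℝ} (hs : s < 2) (r : ℝ) :
    2 * Dkl (tilt p (2 / (2 - s))) p + s * (shannonEntropy (tilt p (2 / (2 - s))) + r)
      = s * r - (2 - s) * logb 2 (tiltNorm p (2 / (2 - s))) := by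
  have hβ : 2 / (2 - s) ≠ 0 := (div_pos two_pos (sub_pos.2 hs)).ne'
  rw [objective_eq_Dkl_tilt hp hs.ne r (isProb_tilt hp _) fun x hx => tilt_eq_zero hβ hx,
    Dkl_self]
  ring

theorem isLeast_objective (hp : IsProb p) {s : ℝ} (hs : s < 2) (r : ℝ) :
    IsLeast {w | ∃ t : X → ℝ, IsProb t ∧ (∀ x, p x = 0 → t x = 0) ∧
        w = 2 * Dkl t p + s * (shannonEntropy t + r)}
      (s * r - (2 - s) * logb 2 (tiltNorm p (2 / (2 - s)))) := by
  have hβ : 2 / (2 - s) ≠ 0 := (div_pos two_pos (sub_pos.2 hs)).ne'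
  constructor
  · exact ⟨tilt p (2 / (2 - s)), isProb_tilt hp _, fun x hx => tilt_eq_zero hβ hx,
      (objective_tilt hp hs r).symm⟩
  · rintro w ⟨t, ht, hsupp, rfl⟩
    have hsupp' : ∀ x, tilt p (2 / (2 - s)) x = 0 → t x = 0 := fun x hx =>
      hsupp x ((hp.1 x).eq_or_lt.resolve_right fun hpx => (tilt_pos hp hpx).ne' hx).symm
    have hD := Dkl_nonneg ht (isProb_tilt hp _).1 (isProb_tilt hp _).2.le hsupp'
    rw [objective_eq_Dkl_tilt hp hs.ne r ht hsupp]
    nlinarith [sub_pos.2 hs]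

theorem continuousAt_shannonEntropy_tilt (hp : IsProb p) {s : ℝ} (hs : s ≠ 2) :
    ContinuousAt (fun u => shannonEntropy (tilt p (2 / (2 - u)))) s := by
  have h2s : 2 - s ≠ 0 := sub_ne_zero.2 hs.symm
  have hβ : ContinuousAt (fun u : ℝ => 2 / (2 - u)) s := by fun_prop (disch := exact h2s)
  exact continuous_shannonEntropy.continuousAt.comp <|
    (continuousAt_tilt hp (div_ne_zero two_ne_zero h2s)).comp (f := fun u : ℝ => 2 / (2 - u)) hβ

end Entropy

/-- Minimax exchange (an instance of Sion's theorem):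
`sup_{0≤s≤1} inf_t [2D(t‖p) + s(H(t)+r)] = inf_t [2D(t‖p) + max{0, H(t)+r}]`. -/
theorem minimax_positive_part {X : Type*} [Fintype X] (p : X → ℝ) (hp : IsProb p) (r : ℝ) :
    sSup {v | ∃ s ∈ Set.Icc (0:ℝ) 1,
        v = sInf {w | ∃ t : X → ℝ, IsProb t ∧ (∀ x, p x = 0 → t x = 0) ∧
          w = 2 * Dkl t p + s * (shannonEntropy t + r)}} =
      sInf {w | ∃ t : X → ℝ, IsProb t ∧ (∀ x, p x = 0 → t x = 0) ∧
        w = 2 * Dkl t p + max 0 (shannonEntropy t + r)} := by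
  have hlt : ∀ s ∈ Icc (0 : ℝ) 1, s < 2 := fun s hs => hs.2.trans_lt one_lt_two
  obtain ⟨u, hu, hmax⟩ := exists_mem_Icc_max_zero_eq_mul (h := fun u =>
      shannonEntropy (tilt p (2 / (2 - u))) + r) fun s hs =>
    ((continuousAt_shannonEntropy_tilt hp (hlt s hs).ne).add continuousAt_const).continuousWithinAt
  have hβ : 2 / (2 - u) ≠ 0 := (div_pos two_pos (sub_pos.2 (hlt u hu))).ne'
  refine csSup_eq_csInf_of_forall_le
    ⟨u, hu, (isLeast_objective hp (hlt u hu) r).csInf_eq.symm⟩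
    ⟨tilt p (2 / (2 - u)), isProb_tilt hp _, fun x hx => tilt_eq_zero hβ hx, ?_⟩ ?_
  · rw [hmax, objective_tilt hp (hlt u hu) r]
  · rintro v ⟨s, hs, rfl⟩ w ⟨t, ht, hsupp, rfl⟩
    rw [(isLeast_objective hp (hlt s hs) r).csInf_eq]
    exact ((isLeast_objective hp (hlt s hs) r).2 ⟨t, ht, hsupp, rfl⟩).trans
      (by linarith [mul_le_max_zero hs (shannonEntropy t + r)])
end

section
/- Let p be a probability distribution on a finite set X, r ∈ ℝ, and for each n let T_n^X be the set of types. Define for each type t, Π_t-restricted quantities P(t) = p^n(T_n^t). Then for every α ∈ (1/2,1), lim_{n→∞} inf_{t ∈ T_n^X} (1/n)[ (α/(α−1)) log₂ P(t) + log₂|T_n^t| ] = H_β(p), where 1/α + 1/β = 2 and H_β(p) = (1/(1−β)) log₂ ∑_x p(x)^β. -/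
/-- The empirical distribution (type) of a sequence `xs : Fin n → X`. -/
noncomputable def typeOf {X : Type*} [Fintype X] [DecidableEq X] (n : ℕ) (xs : Fin n → X) :
    X → ℝ :=
  fun a => ((Finset.univ.filter fun i => xs i = a).card : ℝ) / n

/-! Write `c = 1 / (1 - β) < 0`, so that `α / (α - 1) = c β`. If the type class `T` has `N`
elements, each of probability `q`, the bracket is
`c β log₂ (N q) + log₂ N = c log₂ (N q ^ β) = c log₂ ∑_{xs ∈ T} ∏ᵢ p(xsᵢ) ^ β`.
These tilted weights of the at most `(n + 1) ^ |X|` type classes add up to `(∑ₓ p(x) ^ β) ^ n`,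
so the largest one lies between this total divided by `(n + 1) ^ |X|` and the total itself.
Dividing the logarithms by `n` pins the infimum to `c log₂ ∑ₓ p(x) ^ β` up to `O(log n / n)`. -/

open Finset Real Filter Topology

section TypeClass

variable {X : Type*} [Fintype X] [DecidableEq X] {n : ℕ}

variable (X) in
noncomputable def types (n : ℕ) : Finset (X → ℝ) :=
  univ.image (typeOf n : (Fin n → X) → X → ℝ)

noncomputable def typeClass (n : ℕ) (t : X → ℝ) : Finset (Fin n → X) :=
  {xs | typeOf n xs = t}

noncomputable def typeClassWeight (w : X → ℝ) (n : ℕ) (t : X → ℝ) : ℝ :=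
  ∑ xs ∈ typeClass n t, ∏ i, w (xs i)

lemma mem_typeClass {t : X → ℝ} {xs : Fin n → X} : xs ∈ typeClass n t ↔ typeOf n xs = t := by
  simp [typeClass]

lemma card_filter_eq_of_typeOf_eq {xs xs' : Fin n → X} (h : typeOf n xs = typeOf n xs')
    (a : X) : #{i | xs i = a} = #{i | xs' i = a} := by
  rcases n.eq_zero_or_pos with rfl | hn
  · simp
  · have := congrFun h a
    simp only [typeOf] at this
    exact_mod_cast (div_left_inj' (by positivity)).mp this

lemma prod_comp_eq_prod_pow_card (w : X → ℝ) (xs : Fin n → X) :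
    ∏ i, w (xs i) = ∏ a, w a ^ #{i | xs i = a} := by
  rw [← prod_fiberwise univ xs]
  refine prod_congr rfl fun a _ => ?_
  rw [prod_congr rfl fun i hi => congrArg w (mem_filter.mp hi).2, prod_const]

lemma prod_comp_eq_of_typeOf_eq (w : X → ℝ) {xs xs' : Fin n → X}
    (h : typeOf n xs = typeOf n xs') : ∏ i, w (xs i) = ∏ i, w (xs' i) := by
  simp only [prod_comp_eq_prod_pow_card, card_filter_eq_of_typeOf_eq h]

lemma typeClassWeight_eq_card_mul (w : X → ℝ) {xs₀ : Fin n → X} :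
    typeClassWeight w n (typeOf n xs₀) = #(typeClass n (typeOf n xs₀)) * ∏ i, w (xs₀ i) := by
  rw [typeClassWeight, ← nsmul_eq_mul, ← sum_const]
  exact sum_congr rfl fun xs hxs => prod_comp_eq_of_typeOf_eq w (mem_typeClass.mp hxs)

lemma sum_typeClassWeight (w : X → ℝ) :
    ∑ t ∈ types X n, typeClassWeight w n t = (∑ x, w x) ^ n := by
  rw [Fintype.sum_pow, ← sum_fiberwise_of_maps_to (t := types X n) (g := typeOf n)
    fun xs _ => mem_image_of_mem _ (mem_univ xs)]
  rfl

lemma typeClassWeight_le_pow_sum {w : X → ℝ} (hw : ∀ x, 0 ≤ w x) (t : X → ℝ) :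
    typeClassWeight w n t ≤ (∑ x, w x) ^ n := by
  rw [Fintype.sum_pow]
  exact sum_le_sum_of_subset_of_nonneg (subset_univ _)
    fun xs _ _ => prod_nonneg fun i _ => hw (xs i)

lemma card_types_le : #(types X n) ≤ (n + 1) ^ Fintype.card X := by
  have hsub : types X n ⊆ univ.image fun (c : X → Fin (n + 1)) a => ((c a : ℕ) : ℝ) / n := by
    intro t ht
    obtain ⟨xs, -, rfl⟩ := mem_image.mp ht
    have hcount (a : X) : #{i | xs i = a} < n + 1 :=
      Nat.lt_succ_of_le ((card_filter_le _ _).trans_eq (card_fin n))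
    exact mem_image.mpr ⟨fun a => ⟨_, hcount a⟩, mem_univ _, rfl⟩
  calc _ ≤ _ := card_le_card hsub
    _ ≤ #(univ : Finset (X → Fin (n + 1))) := card_image_le
    _ = (n + 1) ^ Fintype.card X := by simp

lemma exists_typeClassWeight_ge [Nonempty X] {w : X → ℝ} (hw : ∀ x, 0 ≤ w x) :
    ∃ xs : Fin n → X,
      (∑ x, w x) ^ n / (n + 1) ^ Fintype.card X ≤ typeClassWeight w n (typeOf n xs) := by
  set M := (∑ x, w x) ^ n / (n + 1) ^ Fintype.card X
  have hM : 0 ≤ M := by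
    have := sum_nonneg fun x (_ : x ∈ univ) => hw x
    positivity
  have hcard : (#(types X n) : ℝ) ≤ (n + 1) ^ Fintype.card X := by
    exact_mod_cast card_types_le
  have hsum : ∑ _t ∈ types X n, M ≤ ∑ t ∈ types X n, typeClassWeight w n t := by
    rw [sum_typeClassWeight, sum_const, nsmul_eq_mul]
    calc (#(types X n) : ℝ) * M ≤ (n + 1) ^ Fintype.card X * M :=
          mul_le_mul_of_nonneg_right hcard hM
      _ = (∑ x, w x) ^ n := mul_div_cancel₀ _ (by positivity)
  obtain ⟨t, ht, hle⟩ := exists_le_of_sum_le (univ_nonempty.image _) hsum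
  obtain ⟨xs, -, rfl⟩ := mem_image.mp ht
  exact ⟨xs, hle⟩

lemma exists_typeOf_eq_of_typeClassWeight_ne_zero {w : X → ℝ} {t : X → ℝ}
    (h : typeClassWeight w n t ≠ 0) : ∃ xs, typeOf n xs = t ∧ ∀ i, w (xs i) ≠ 0 := by
  obtain ⟨xs, hxs, hprod⟩ := exists_ne_zero_of_sum_ne_zero h
  exact ⟨xs, mem_typeClass.mp hxs, fun i => (prod_ne_zero_iff.mp hprod) i (mem_univ i)⟩

lemma card_typeClass_typeOf_pos (xs : Fin n → X) : 0 < #(typeClass n (typeOf n xs)) :=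
  card_pos.mpr ⟨xs, mem_typeClass.mpr rfl⟩

lemma typeClassWeight_typeOf_pos {w : X → ℝ} {xs : Fin n → X} (hxs : ∀ i, 0 < w (xs i)) :
    0 < typeClassWeight w n (typeOf n xs) := by
  rw [typeClassWeight_eq_card_mul]
  exact mul_pos (mod_cast card_typeClass_typeOf_pos xs) (prod_pos fun i _ => hxs i)

variable {b : ℝ} {w : X → ℝ}

lemma logb_typeClassWeight_div_le (hb : 1 < b) (hw : ∀ x, 0 ≤ w x) (hn : 1 ≤ n)
    {xs : Fin n → X} (hxs : ∀ i, 0 < w (xs i)) :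
    logb b (typeClassWeight w n (typeOf n xs)) / n ≤ logb b (∑ x, w x) := by
  rw [div_le_iff₀' (mod_cast hn), ← logb_pow]
  exact logb_le_logb_of_le hb (typeClassWeight_typeOf_pos hxs) (typeClassWeight_le_pow_sum hw _)

lemma exists_logb_typeClassWeight_div_ge (hb : 1 < b) (hw : ∀ x, 0 ≤ w x)
    (hsum : 0 < ∑ x, w x) (hn : 1 ≤ n) : ∃ xs : Fin n → X, (∀ i, w (xs i) ≠ 0) ∧
      logb b (∑ x, w x) - Fintype.card X * (logb b (n + 1) / n) ≤
        logb b (typeClassWeight w n (typeOf n xs)) / n := by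
  obtain ⟨x₀, -⟩ := nonempty_of_sum_ne_zero hsum.ne'
  have : Nonempty X := ⟨x₀⟩
  obtain ⟨xs, hle⟩ := exists_typeClassWeight_ge (n := n) hw
  have hW : 0 < typeClassWeight w n (typeOf n xs) := lt_of_lt_of_le (by positivity) hle
  obtain ⟨xs', htype, hxs'⟩ := exists_typeOf_eq_of_typeClassWeight_ne_zero hW.ne'
  refine ⟨xs', hxs', ?_⟩
  have hlog := logb_le_logb_of_le hb (by positivity) hle
  rw [logb_div (by positivity) (by positivity), logb_pow, logb_pow] at hlog
  rw [htype, le_div_iff₀ (mod_cast hn)]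
  field_simp
  linarith

end TypeClass

lemma tendsto_logb_nat_add_one_div_nat (b : ℝ) :
    Tendsto (fun n : ℕ => logb b (n + 1) / n) atTop (𝓝 0) := by
  have := (tendsto_pow_logb_div_mul_add_atTop (b := b) 1 (-1) 1 one_ne_zero).comp
    (tendsto_atTop_add_const_right atTop 1 tendsto_natCast_atTop_atTop)
  refine this.congr fun n => ?_
  simp [← sub_eq_add_neg]

lemma div_one_sub_mul_logb_mul_add_logb {b N q β : ℝ} (hβ : β ≠ 1) (hN : 0 < N) (hq : 0 < q) :
    β / (1 - β) * logb b (N * q) + logb b N = 1 / (1 - β) * logb b (N * q ^ β) := by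
  rw [logb_mul hN.ne' hq.ne', logb_mul hN.ne' (rpow_pos_of_pos hq β).ne',
    logb_rpow_eq_mul_logb_of_pos hq]
  have : 1 - β ≠ 0 := sub_ne_zero.mpr hβ.symm
  field_simp
  ring

lemma one_lt_and_div_sub_one_eq_div_one_sub {α β : ℝ} (hα : α ∈ Set.Ioo (1 / 2 : ℝ) 1)
    (hβ : 1 / α + 1 / β = 2) : 1 < β ∧ α / (α - 1) = β / (1 - β) := by
  obtain ⟨hα₁, hα₂⟩ := hα
  have hβ' : β = α / (2 * α - 1) := by
    have : 1 / β = (2 * α - 1) / α := by rw [eq_sub_of_add_eq' hβ]; field_simp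
    rw [← one_div_one_div β, this, one_div_div]
  subst hβ'
  have h₁ : 0 < 2 * α - 1 := by linarith
  have h₂ : α - 1 ≠ 0 := by linarith
  refine ⟨(one_lt_div h₁).mpr (by linarith), ?_⟩
  rw [one_sub_div h₁.ne', div_div_div_cancel_right₀ h₁.ne']
  ring_nf

section Renyi

variable {X : Type*} [Fintype X] [DecidableEq X] {p : X → ℝ} {β : ℝ} {n : ℕ}

lemma mul_logb_prob_add_logb_card_eq (hp0 : ∀ x, 0 ≤ p x) (hβ : β ≠ 1) {xs₀ : Fin n → X}
    (hxs₀ : ∀ i, p (xs₀ i) ≠ 0) :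
    β / (1 - β) *
        logb 2 (∑ xs : {xs : Fin n → X // typeOf n xs = typeOf n xs₀}, ∏ i, p (xs.1 i)) +
      logb 2 {xs : Fin n → X | typeOf n xs = typeOf n xs₀}.ncard =
    1 / (1 - β) * logb 2 (typeClassWeight (fun x => p x ^ β) n (typeOf n xs₀)) := by
  have hsum : ∑ xs : {xs : Fin n → X // typeOf n xs = typeOf n xs₀}, ∏ i, p (xs.1 i) =
      typeClassWeight p n (typeOf n xs₀) :=
    (sum_subtype _ (fun _ => mem_typeClass) fun xs => ∏ i, p (xs i)).symm
  have hncard : {xs : Fin n → X | typeOf n xs = typeOf n xs₀}.ncard =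
      #(typeClass n (typeOf n xs₀)) := by
    rw [← Set.ncard_coe_finset]
    simp only [typeClass, coe_filter, mem_univ, true_and]
  have hq : 0 < ∏ i, p (xs₀ i) := prod_pos fun i _ => (hp0 _).lt_of_ne' (hxs₀ i)
  rw [hsum, hncard, typeClassWeight_eq_card_mul, typeClassWeight_eq_card_mul,
    finsetProd_rpow _ _ fun i _ => hp0 _]
  exact div_one_sub_mul_logb_mul_add_logb hβ (mod_cast card_typeClass_typeOf_pos xs₀) hq

lemma setOf_mul_logb_prob_add_logb_card_eq_image (hp0 : ∀ x, 0 ≤ p x) (hβ : β ≠ 1) :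
    {v | ∃ t : X → ℝ, (∃ xs : Fin n → X, typeOf n xs = t ∧ ∀ i, p (xs i) ≠ 0) ∧
        v = (1 / (n : ℝ)) *
          ((β / (1 - β)) * logb 2 (∑ xs : {xs : Fin n → X // typeOf n xs = t}, ∏ i, p (xs.1 i)) +
            logb 2 ({xs : Fin n → X | typeOf n xs = t}.ncard))} =
      (fun xs => 1 / (1 - β) *
          (logb 2 (typeClassWeight (fun x => p x ^ β) n (typeOf n xs)) / n)) ''
        {xs | ∀ i, p (xs i) ≠ 0} := by
  ext v
  constructor
  · rintro ⟨_, ⟨xs, rfl, hxs⟩, rfl⟩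
    exact ⟨xs, hxs, by rw [mul_logb_prob_add_logb_card_eq hp0 hβ hxs]; ring⟩
  · rintro ⟨xs, hxs, rfl⟩
    exact ⟨_, ⟨xs, rfl, hxs⟩, by rw [mul_logb_prob_add_logb_card_eq hp0 hβ hxs]; ring⟩

end Renyi

/-- For `α ∈ (1/2,1)` and `1/α + 1/β = 2`:
`lim_n inf_t (1/n)[ (α/(α-1)) log₂ P(t) + log₂ |T_n^t| ] = H_β(p)`,
the infimum running over types `t` of sequences supported in `supp p`
(equivalently those with `P(t) > 0`). -/
theorem types_renyi_limit {X : Type*} [Fintype X] [DecidableEq X] (p : X → ℝ)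
    (hp : IsProb p) (α : ℝ) (hα : α ∈ Set.Ioo (1/2 : ℝ) 1) (β : ℝ)
    (hβ : 1/α + 1/β = 2) :
    Filter.Tendsto (fun n : ℕ =>
        sInf {v | ∃ t : X → ℝ,
          (∃ xs : Fin n → X, typeOf n xs = t ∧ ∀ i, p (xs i) ≠ 0) ∧
          v = (1 / (n : ℝ)) *
            ((α / (α - 1)) *
                Real.logb 2 (∑ xs : {xs : Fin n → X // typeOf n xs = t}, ∏ i, p (xs.1 i)) +
              Real.logb 2 ({xs : Fin n → X | typeOf n xs = t}.ncard))})
      Filter.atTop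
      (nhds ((1 / (1 - β)) * Real.logb 2 (∑ x, p x ^ β))) := by
  obtain ⟨hp0, hp1⟩ := hp
  obtain ⟨hβ1, hαβ⟩ := one_lt_and_div_sub_one_eq_div_one_sub hα hβ
  obtain ⟨x₀, -, hx₀⟩ : ∃ x ∈ univ, p x ≠ 0 := exists_ne_zero_of_sum_ne_zero (hp1 ▸ one_ne_zero)
  have hpβ (x : X) (hx : p x ≠ 0) : 0 < p x ^ β := rpow_pos_of_pos ((hp0 x).lt_of_ne' hx) β
  have hw (x : X) : 0 ≤ p x ^ β := rpow_nonneg (hp0 x) β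
  have hc : 1 / (1 - β) < 0 := one_div_neg.mpr (by linarith)
  set L := logb 2 (∑ x, p x ^ β)
  have hlower (n : ℕ) (hn : 1 ≤ n) : ∀ v ∈ (fun xs => 1 / (1 - β) *
      (logb 2 (typeClassWeight (fun x => p x ^ β) n (typeOf n xs)) / n)) ''
        {xs | ∀ i, p (xs i) ≠ 0}, 1 / (1 - β) * L ≤ v := by
    rintro _ ⟨xs, hxs, rfl⟩
    exact mul_le_mul_of_nonpos_left
      (logb_typeClassWeight_div_le one_lt_two hw hn fun i => hpβ _ (hxs i)) hc.le
  have hupper : Tendsto (fun n : ℕ => 1 / (1 - β) * (L - Fintype.card X * (logb 2 (n + 1) / n)))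
      atTop (𝓝 (1 / (1 - β) * L)) := by
    simpa using (((tendsto_logb_nat_add_one_div_nat 2).const_mul (Fintype.card X : ℝ)).const_sub
      L).const_mul (1 / (1 - β))
  simp only [hαβ, setOf_mul_logb_prob_add_logb_card_eq_image hp0 (by linarith : β ≠ 1)]
  refine tendsto_of_tendsto_of_tendsto_of_le_of_le' tendsto_const_nhds hupper ?_ ?_ <;>
    filter_upwards [eventually_ge_atTop 1] with n hn
  · exact le_csInf ⟨_, fun _ => x₀, fun _ => hx₀, rfl⟩ (hlower n hn)
  · obtain ⟨xs, hxs, hge⟩ := exists_logb_typeClassWeight_div_ge one_lt_two hw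
      (sum_pos' (fun x _ => hw x) ⟨x₀, mem_univ _, hpβ x₀ hx₀⟩) hn
    have hsupp (i : Fin n) : p (xs i) ≠ 0 := fun h => hxs i (by rw [h, zero_rpow (by linarith)])
    exact (csInf_le ⟨_, hlower n hn⟩ ⟨xs, hsupp, rfl⟩).trans (mul_le_mul_of_nonpos_left hge hc.le)
end
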